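/- arXiv:2011.01323 — 5 statements merged into one kernel-verified Lean document; each statement's English description precedes it below -/
import Mathlib

section
/- Let N₁ and N₂ be FS^op-modules over ℚ, and suppose that N₁ is generated in degrees ≤ m₁ and N₂ is generated in degrees ≤ m₂. Then for every object E of FS, the ℚ-vector space N₁(E) ⊗ N₂(E) is spanned by the set of elements of the form (N₁(φ)(x)) ⊗ (N₂(φ)(y)), where φ : E → F ranges over surjections in FS with |F| ≤ m₁·m₂, x ∈ N₁(F), and y ∈ N₂(F). In other words, the pointwise tensor product N₁ ⊗ N₂ is generated in degrees ≤ m₁m₂. -/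
open CategoryTheory Opposite

/-- An object of the category `FS`: a nonempty finite type. -/
structure FSObj : Type 1 where
  carrier : Type
  [fintype : Fintype carrier]
  [nonempty : Nonempty carrier]

attribute [instance] FSObj.fintype FSObj.nonempty

/-- The category `FS` of nonempty finite types with surjections. -/
instance : Category FSObj where
  Hom A B := {f : A.carrier → B.carrier // Function.Surjective f}
  id A := ⟨id, Function.surjective_id⟩
  comp f g := ⟨g.1 ∘ f.1, g.2.comp f.2⟩

/-- An `FSᵒᵖ`-module `N` over `ℚ` is generated in degrees `≤ m` if for every
object `E` of `FS`, the vector space `N(E)` is spanned by the images of the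
pullback maps `N(φ) : N(F) → N(E)` over all surjections `φ : E → F` with `|F| ≤ m`. -/
def GeneratedInDegreesLE (N : FSObjᵒᵖ ⥤ ModuleCat ℚ) (m : ℕ) : Prop :=
  ∀ E : FSObj, Submodule.span ℚ
    {x : N.obj (op E) | ∃ (F : FSObj) (φ : E ⟶ F) (y : N.obj (op F)),
      Fintype.card F.carrier ≤ m ∧ x = N.map φ.op y} = ⊤

/-- if `N₁` is generated in degrees `≤ m₁` and `N₂` in degrees `≤ m₂`,
then the pointwise tensor product is generated in degrees `≤ m₁ * m₂`. -/
theorem stmt_1 (N₁ N₂ : FSObjᵒᵖ ⥤ ModuleCat ℚ) (m₁ m₂ : ℕ)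
    (h₁ : GeneratedInDegreesLE N₁ m₁) (h₂ : GeneratedInDegreesLE N₂ m₂)
    (E : FSObj) :
    Submodule.span ℚ
      {z : TensorProduct ℚ (N₁.obj (op E)) (N₂.obj (op E)) |
        ∃ (F : FSObj) (φ : E ⟶ F) (x : N₁.obj (op F)) (y : N₂.obj (op F)),
          Fintype.card F.carrier ≤ m₁ * m₂ ∧
          z = (N₁.map φ.op x) ⊗ₜ[ℚ] (N₂.map φ.op y)} = ⊤ := by
  classical
  set S : Set (TensorProduct ℚ (N₁.obj (op E)) (N₂.obj (op E))) :=
    {z | ∃ (F : FSObj) (φ : E ⟶ F) (x : N₁.obj (op F)) (y : N₂.obj (op F)),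
          Fintype.card F.carrier ≤ m₁ * m₂ ∧
          z = (N₁.map φ.op x) ⊗ₜ[ℚ] (N₂.map φ.op y)} with hS
  -- key: a pure tensor of generators is in S
  have key : ∀ (a : N₁.obj (op E)) (b : N₂.obj (op E)),
      (∃ (F₁ : FSObj) (φ₁ : E ⟶ F₁) (x : N₁.obj (op F₁)),
        Fintype.card F₁.carrier ≤ m₁ ∧ a = N₁.map φ₁.op x) →
      (∃ (F₂ : FSObj) (φ₂ : E ⟶ F₂) (y : N₂.obj (op F₂)),
        Fintype.card F₂.carrier ≤ m₂ ∧ b = N₂.map φ₂.op y) →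
      a ⊗ₜ[ℚ] b ∈ S := by
    rintro a b ⟨F₁, φ₁, x, hF₁, rfl⟩ ⟨F₂, φ₂, y, hF₂, rfl⟩
    let f : E.carrier → F₁.carrier × F₂.carrier := fun e => (φ₁.1 e, φ₂.1 e)
    haveI : Fintype (Set.range f) := (Set.toFinite _).fintype
    haveI : Nonempty (Set.range f) := (Set.range_nonempty f).to_subtype
    let F : FSObj := ⟨Set.range f⟩
    let φ : E ⟶ F := ⟨fun e => ⟨f e, e, rfl⟩, by rintro ⟨-, e, rfl⟩; exact ⟨e, rfl⟩⟩
    let p₁ : F ⟶ F₁ := ⟨fun w => w.1.1, by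
      intro c
      obtain ⟨e, he⟩ := φ₁.2 c
      exact ⟨⟨f e, e, rfl⟩, he⟩⟩
    let p₂ : F ⟶ F₂ := ⟨fun w => w.1.2, by
      intro c
      obtain ⟨e, he⟩ := φ₂.2 c
      exact ⟨⟨f e, e, rfl⟩, he⟩⟩
    have hcard : Fintype.card F.carrier ≤ m₁ * m₂ := by
      calc Fintype.card F.carrier ≤ Fintype.card (F₁.carrier × F₂.carrier) :=
            Fintype.card_le_of_injective _ Subtype.val_injective
        _ = Fintype.card F₁.carrier * Fintype.card F₂.carrier := Fintype.card_prod _ _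
        _ ≤ m₁ * m₂ := Nat.mul_le_mul hF₁ hF₂
    have hφ₁ : φ₁ = φ ≫ p₁ := rfl
    have hφ₂ : φ₂ = φ ≫ p₂ := rfl
    refine ⟨F, φ, N₁.map p₁.op x, N₂.map p₂.op y, hcard, ?_⟩
    rw [hφ₁, hφ₂, op_comp, op_comp, Functor.map_comp, Functor.map_comp]
    rfl
  rw [eq_top_iff]
  rintro z -
  induction z using TensorProduct.induction_on with
  | zero => exact zero_mem _
  | add u v hu hv => exact add_mem hu hv
  | tmul a b =>
    have ha : a ∈ Submodule.span ℚ
        {x : N₁.obj (op E) | ∃ (F : FSObj) (φ : E ⟶ F) (y : N₁.obj (op F)),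
          Fintype.card F.carrier ≤ m₁ ∧ x = N₁.map φ.op y} := by
      rw [h₁ E]; trivial
    have hb : b ∈ Submodule.span ℚ
        {x : N₂.obj (op E) | ∃ (F : FSObj) (φ : E ⟶ F) (y : N₂.obj (op F)),
          Fintype.card F.carrier ≤ m₂ ∧ x = N₂.map φ.op y} := by
      rw [h₂ E]; trivial
    induction ha using Submodule.span_induction with
    | mem a hamem =>
      induction hb using Submodule.span_induction with
      | mem b hbmem => exact Submodule.subset_span (key a b hamem hbmem)
      | zero => rw [TensorProduct.tmul_zero]; exact zero_mem _
      | add u v _ _ hu hv =>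
        rw [TensorProduct.tmul_add]; exact add_mem hu hv
      | smul r u _ hu =>
        rw [TensorProduct.tmul_smul]; exact Submodule.smul_mem _ r hu
    | zero => rw [TensorProduct.zero_tmul]; exact zero_mem _
    | add u v _ _ hu hv =>
      rw [TensorProduct.add_tmul]; exact add_mem hu hv
    | smul r u _ hu =>
      rw [← TensorProduct.smul_tmul']; exact Submodule.smul_mem _ r hu
end

section
/- Let N be an FS^op-module over ℚ that is generated in degrees ≤ m, and let i ≥ 1. Then for every object E of FS, the i-fold tensor power N(E)^{⊗ i} is spanned by the set of elements of the form (N(φ)(x₁)) ⊗ (N(φ)(x₂)) ⊗ ⋯ ⊗ (N(φ)(x_i)), where φ : E → F ranges over surjections in FS with |F| ≤ m^i and x₁, …, x_i ∈ N(F). In other words, the i-fold pointwise tensor power of N is generated in degrees ≤ m^i. -/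
open CategoryTheory Opposite

theorem multilinear_span_mem {R : Type*} [CommSemiring R] {ι : Type*} [DecidableEq ι] [Fintype ι]
    {M : ι → Type*} {P : Type*} [∀ j, AddCommMonoid (M j)] [AddCommMonoid P]
    [∀ j, Module R (M j)] [Module R P]
    (f : MultilinearMap R M P) (T : ∀ j, Set (M j)) (p : Submodule R P)
    (hT : ∀ w : ∀ j, M j, (∀ j, w j ∈ T j) → f w ∈ p)
    (v : ∀ j, M j) (hv : ∀ j, v j ∈ Submodule.span R (T j)) : f v ∈ p := by
  suffices H : ∀ s : Finset ι, ∀ w : ∀ j, M j, (∀ j ∈ s, w j ∈ Submodule.span R (T j)) →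
      (∀ j ∉ s, w j ∈ T j) → f w ∈ p by
    exact H Finset.univ v (fun j _ => hv j) (fun j hj => absurd (Finset.mem_univ j) hj)
  intro s
  induction s using Finset.induction_on with
  | empty => exact fun w _ h2 => hT w (fun j => h2 j (by simp))
  | @insert a s ha ih =>
    intro w h1 h2
    have hwa : w a ∈ Submodule.span R (T a) := h1 a (Finset.mem_insert_self a s)
    have key : ∀ x ∈ Submodule.span R (T a), f (Function.update w a x) ∈ p := by
      intro x hx
      induction hx using Submodule.span_induction with
      | mem x hx =>
        refine ih (Function.update w a x) (fun j hj => ?_) (fun j hj => ?_)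
        · rw [Function.update_of_ne (by rintro rfl; exact ha hj)]
          exact h1 j (Finset.mem_insert_of_mem hj)
        · by_cases hja : j = a
          · subst hja; simpa using hx
          · rw [Function.update_of_ne hja]
            exact h2 j (by simp [hja, hj])
      | zero => rw [f.map_update_zero]; exact p.zero_mem
      | add x y _ _ hx hy => rw [f.map_update_add]; exact p.add_mem hx hy
      | smul r x _ hx => rw [f.map_update_smul]; exact p.smul_mem r hx
    have := key (w a) hwa
    rwa [Function.update_eq_self] at this

open scoped TensorProduct in
/-- if `N` is generated in degrees `≤ m`, then the `i`-fold pointwise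
tensor power of `N` is generated in degrees `≤ m ^ i`. -/
theorem stmt_2 (N : FSObjᵒᵖ ⥤ ModuleCat ℚ) (m : ℕ)
    (h : GeneratedInDegreesLE N m) (i : ℕ) (hi : 1 ≤ i) (E : FSObj) :
    Submodule.span ℚ
      {z : ⨂[ℚ] (_ : Fin i), N.obj (op E) |
        ∃ (F : FSObj) (φ : E ⟶ F) (x : Fin i → N.obj (op F)),
          Fintype.card F.carrier ≤ m ^ i ∧
          z = PiTensorProduct.tprod ℚ (fun j => N.map φ.op (x j))} = ⊤ := by
  classical
  rw [eq_top_iff, ← PiTensorProduct.span_tprod_eq_top, Submodule.span_le]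
  rintro _ ⟨v, rfl⟩
  refine multilinear_span_mem (PiTensorProduct.tprod ℚ)
    (fun _ => {x : N.obj (op E) | ∃ (F : FSObj) (φ : E ⟶ F) (y : N.obj (op F)),
      Fintype.card F.carrier ≤ m ∧ x = N.map φ.op y}) _ ?_ v
    (fun j => by rw [h E]; exact Submodule.mem_top)
  intro w hw
  choose F φ y hcard hy using hw
  set f : E.carrier → ∀ j, (F j).carrier := fun e j => (φ j).1 e with hf
  haveI : Fintype ↥(Set.range f) := Fintype.ofFinite _
  let G : FSObj := ⟨↥(Set.range f)⟩
  have hGcard : Fintype.card G.carrier ≤ m ^ i := by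
    calc Fintype.card G.carrier ≤ Fintype.card (∀ j, (F j).carrier) :=
          Fintype.card_le_of_injective Subtype.val Subtype.val_injective
      _ = ∏ j, Fintype.card (F j).carrier := Fintype.card_pi
      _ ≤ ∏ _j : Fin i, m := Finset.prod_le_prod' (fun j _ => hcard j)
      _ = m ^ i := by simp
  let φG : E ⟶ G := ⟨fun e => ⟨f e, ⟨e, rfl⟩⟩, by rintro ⟨_, e, rfl⟩; exact ⟨e, rfl⟩⟩
  let ψ : ∀ j, G ⟶ F j := fun j => ⟨fun p => p.1 j, by
    intro b
    obtain ⟨e, he⟩ := (φ j).2 b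
    exact ⟨φG.1 e, he⟩⟩
  refine Submodule.subset_span ⟨G, φG, fun j => N.map (ψ j).op (y j), hGcard, ?_⟩
  congr 1
  funext j
  have hcomp : φ j = φG ≫ ψ j := Subtype.ext rfl
  rw [hy j, hcomp, op_comp, N.map_comp]
  rfl
end

section
/- Let N be an FS^op-module over ℚ and let m ≥ 1. Then the following are equivalent: (i) there exist finitely many nonempty finite types F₁, …, F_k, each of cardinality ≤ m, and a natural transformation ⊕_{j=1}^k P_{F_j} ⟶ N that is pointwise surjective (i.e., N is a quotient of a finite direct sum of principal projectives indexed by sets of cardinality ≤ m); (ii) for every object E of FS, the vector space N(E) is finite-dimensional and is spanned by the union, over all surjections φ : E → F with |F| ≤ m, of the images of the pullback maps N(φ) : N(F) → N(E). -/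
open CategoryTheory Opposite

/-- The principal projective `FSᵒᵖ`-module `P_F`: it sends a nonempty finite type `E`
to the free `ℚ`-vector space on the set of surjections `E → F`, with pullback along a
surjection `φ : E' → E` sending a basis element `ψ : E → F` to `ψ ∘ φ : E' → F`. -/
noncomputable def principalProj (F : FSObj) : FSObjᵒᵖ ⥤ ModuleCat ℚ where
  obj E := ModuleCat.of ℚ ((unop E ⟶ F) →₀ ℚ)
  map {E E'} φ := ModuleCat.ofHom (Finsupp.lmapDomain ℚ ℚ (fun ψ => φ.unop ≫ ψ))
  map_id E := by
    show ModuleCat.ofHom (Finsupp.lmapDomain ℚ ℚ (fun ψ : unop E ⟶ F => (𝟙 E : E ⟶ E).unop ≫ ψ)) = _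
    have h : (fun ψ : unop E ⟶ F => (𝟙 E : E ⟶ E).unop ≫ ψ) = id := by
      funext ψ; simp
    rw [h, Finsupp.lmapDomain_id]; rfl
  map_comp {E E' E''} φ φ' := by
    show ModuleCat.ofHom (Finsupp.lmapDomain ℚ ℚ (fun ψ : unop E ⟶ F => (φ ≫ φ').unop ≫ ψ)) = _
    have h : (fun ψ : unop E ⟶ F => (φ ≫ φ').unop ≫ ψ) =
        (fun ψ : unop E' ⟶ F => φ'.unop ≫ ψ) ∘ (fun ψ : unop E ⟶ F => φ.unop ≫ ψ) := by
      funext ψ; simp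
    rw [h, Finsupp.lmapDomain_comp]; rfl

open CategoryTheory.Limits

noncomputable instance : HasFiniteBiproducts (FSObjᵒᵖ ⥤ ModuleCat ℚ) :=
  HasFiniteBiproducts.of_hasFiniteProducts

/-!
By Yoneda, a map `P_F ⟶ N` is the same as an element `y ∈ N(F)`, and its image in `N(E)` is
spanned by the pullbacks `N(ψ) y` along the finitely many `ψ : E → F`. So a pointwise surjection
`⨁ P_{F_j} ⟶ N` is a finite family `y_j ∈ N(F_j)` whose pullbacks span every `N(E)`, which gives
(ii). Conversely, every `F` with `|F| ≤ m` is isomorphic to some `{0, …, c}` with `c < m`, so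
bases of the finitely many spaces `N({0, …, c})` form such a family.
-/

instance (A B : FSObj) : Finite (A ⟶ B) := Subtype.finite

-- `fin n` has `n + 1` elements, since objects of `FS` are nonempty.
def FSObj.fin (n : ℕ) : FSObj := ⟨Fin (n + 1)⟩

def FSObj.isoOfEquiv {A B : FSObj} (e : A.carrier ≃ B.carrier) : A ≅ B where
  hom := ⟨e, e.surjective⟩
  inv := ⟨e.symm, e.symm.surjective⟩
  hom_inv_id := Subtype.ext (funext e.symm_apply_apply)
  inv_hom_id := Subtype.ext (funext e.apply_symm_apply)

lemma FSObj.exists_iso_fin {m : ℕ} (F : FSObj) (hF : Fintype.card F.carrier ≤ m) :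
    ∃ c : Fin m, Nonempty (F ≅ FSObj.fin c) := by
  have hpos : 0 < Fintype.card F.carrier := Fintype.card_pos
  refine ⟨⟨Fintype.card F.carrier - 1, by omega⟩, ⟨FSObj.isoOfEquiv ?_⟩⟩
  exact Fintype.equivFinOfCardEq (by simp only; omega)

lemma range_app_biproduct {C : Type*} [Category C] {R : Type*} [Ring R] {J : Type}
    [Fintype J] {f : J → C ⥤ ModuleCat R} [HasBiproduct f] {N : C ⥤ ModuleCat R}
    (η : ⨁ f ⟶ N) (X : C) :
    LinearMap.range (η.app X).hom = ⨆ j, LinearMap.range ((biproduct.ι f j ≫ η).app X).hom := by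
  refine le_antisymm ?_ (iSup_le fun j => ?_)
  · rintro - ⟨z, rfl⟩
    have hz := ConcreteCategory.congr_hom (NatTrans.congr_app (biproduct.total (f := f)) X) z
    simp only [NatTrans.app_sum, NatTrans.comp_app, NatTrans.id_app, ModuleCat.hom_sum,
      LinearMap.sum_apply, ModuleCat.hom_comp, LinearMap.comp_apply, ModuleCat.hom_id,
      LinearMap.id_apply] at hz
    rw [← hz, map_sum]
    exact Submodule.sum_mem _ fun j _ => Submodule.mem_iSup_of_mem j ⟨_, rfl⟩
  · rw [NatTrans.comp_app, ModuleCat.hom_comp]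
    exact LinearMap.range_comp_le_range _ _

namespace principalProj

variable (N : FSObjᵒᵖ ⥤ ModuleCat ℚ)

noncomputable def lift {F : FSObj} (y : N.obj (op F)) : principalProj F ⟶ N where
  app E := ModuleCat.ofHom (Finsupp.linearCombination ℚ fun ψ : unop E ⟶ F => N.map ψ.op y)
  naturality E E' φ := by
    refine ModuleCat.hom_ext (Finsupp.lhom_ext' fun ψ => LinearMap.ext_ring ?_)
    change Finsupp.linearCombination ℚ (fun ψ : unop E' ⟶ F => N.map ψ.op y)
        (Finsupp.mapDomain (fun χ : unop E ⟶ F => φ.unop ≫ χ) (Finsupp.single ψ 1)) =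
      N.map φ (Finsupp.linearCombination ℚ (fun ψ : unop E ⟶ F => N.map ψ.op y)
        (Finsupp.single ψ 1))
    rw [Finsupp.mapDomain_single, Finsupp.linearCombination_single,
      Finsupp.linearCombination_single, one_smul, one_smul, op_comp, Quiver.Hom.op_unop,
      N.map_comp]
    rfl

variable {N}

lemma range_lift_app {F : FSObj} (y : N.obj (op F)) (E : FSObj) :
    LinearMap.range ((lift N y).app (op E)).hom =
      Submodule.span ℚ (Set.range fun ψ : E ⟶ F => N.map ψ.op y) :=
  Finsupp.range_linearCombination ℚ

lemma eq_lift {F : FSObj} (τ : principalProj F ⟶ N) :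
    τ = lift N (τ.app (op F) (Finsupp.single (𝟙 F) 1)) := by
  refine NatTrans.ext (funext fun E => ModuleCat.hom_ext
    (Finsupp.lhom_ext' fun ψ => LinearMap.ext_ring ?_))
  have hψ : Finsupp.single ψ (1 : ℚ) = (principalProj F).map ψ.op (Finsupp.single (𝟙 F) 1) := by
    change _ = Finsupp.mapDomain _ _
    rw [Finsupp.mapDomain_single, Category.comp_id]
    rfl
  change τ.app E (Finsupp.single ψ 1) = Finsupp.linearCombination ℚ _ (Finsupp.single ψ 1)
  rw [Finsupp.linearCombination_single, one_smul, hψ]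
  exact ConcreteCategory.congr_hom (τ.naturality ψ.op) _

end principalProj

section

variable {N : FSObjᵒᵖ ⥤ ModuleCat ℚ} {J : Type} [Fintype J] {F : J → FSObj}

lemma eq_biproduct_desc_lift (η : (⨁ fun j => principalProj (F j)) ⟶ N) :
    η = biproduct.desc fun j => principalProj.lift N
      ((biproduct.ι (fun j => principalProj (F j)) j ≫ η).app (op (F j))
        (Finsupp.single (𝟙 (F j)) 1)) :=
  biproduct.hom_ext' _ _ fun j => by rw [biproduct.ι_desc]; exact principalProj.eq_lift _

lemma range_biproduct_desc_lift_app (y : ∀ j, N.obj (op (F j))) (E : FSObj) :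
    LinearMap.range ((biproduct.desc fun j => principalProj.lift N (y j)).app (op E)).hom =
      Submodule.span ℚ (⋃ j, Set.range fun ψ : E ⟶ F j => N.map ψ.op (y j)) := by
  simp only [range_app_biproduct, biproduct.ι_desc, principalProj.range_lift_app,
    Submodule.span_iUnion]

end

lemma map_op_mem_span_of_iso {N : FSObjᵒᵖ ⥤ ModuleCat ℚ} {E F G : FSObj} (e : F ≅ G)
    {s : Set (N.obj (op G))} (hs : Submodule.span ℚ s = ⊤) (φ : E ⟶ F) (y : N.obj (op F)) :
    N.map φ.op y ∈ Submodule.span ℚ (⋃ ψ : E ⟶ G, N.map ψ.op '' s) := by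
  have hy : N.map φ.op y = N.map (φ ≫ e.hom).op (N.map e.inv.op y) := by
    rw [← ConcreteCategory.comp_apply, ← N.map_comp, ← op_comp, Category.assoc, e.hom_inv_id,
      Category.comp_id]
  have hmem : N.map e.inv.op y ∈ Submodule.span ℚ s := hs ▸ Submodule.mem_top
  rw [hy]
  refine Submodule.span_mono (Set.subset_iUnion _ (φ ≫ e.hom)) ?_
  have := Submodule.mem_map_of_mem (f := (N.map (φ ≫ e.hom).op).hom) hmem
  rwa [Submodule.map_span] at this

section

variable {N : FSObjᵒᵖ ⥤ ModuleCat ℚ} {m : ℕ}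

lemma finiteDimensional_and_generatedInDegreesLE {J : Type} [Fintype J] {F : J → FSObj}
    (hF : ∀ j, Fintype.card (F j).carrier ≤ m) (η : (⨁ fun j => principalProj (F j)) ⟶ N)
    (hη : ∀ E : FSObj, Function.Surjective (η.app (op E))) :
    (∀ E : FSObj, FiniteDimensional ℚ (N.obj (op E))) ∧ GeneratedInDegreesLE N m := by
  obtain ⟨y, rfl⟩ : ∃ y : ∀ j, N.obj (op (F j)),
      η = biproduct.desc fun j => principalProj.lift N (y j) :=
    ⟨_, eq_biproduct_desc_lift η⟩
  have htop (E : FSObj) := LinearMap.range_eq_top.2 (hη E)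
  simp only [range_biproduct_desc_lift_app] at htop
  refine ⟨fun E => Module.finite_def.2 (Submodule.fg_def.2
    ⟨_, Set.finite_iUnion fun j => Set.finite_range _, htop E⟩), fun E => top_unique ?_⟩
  rw [← htop E]
  refine Submodule.span_mono (Set.iUnion_subset fun j => ?_)
  rintro - ⟨ψ, rfl⟩
  exact ⟨F j, ψ, y j, hF j, rfl⟩

lemma exists_surjective_biproduct_of_generatedInDegreesLE
    (hfin : ∀ E : FSObj, FiniteDimensional ℚ (N.obj (op E))) (hgen : GeneratedInDegreesLE N m) :
    ∃ (k : ℕ) (F : Fin k → FSObj), (∀ j, Fintype.card (F j).carrier ≤ m) ∧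
      ∃ η : (⨁ fun j => principalProj (F j)) ⟶ N,
        ∀ E : FSObj, Function.Surjective (η.app (op E)) := by
  let b (c : Fin m) := Module.finBasis ℚ (N.obj (op (FSObj.fin c)))
  let e := Fintype.equivFin (Σ c : Fin m, Fin (Module.finrank ℚ (N.obj (op (FSObj.fin c)))))
  refine ⟨_, fun j => FSObj.fin (e.symm j).1,
    fun j => (Fintype.card_fin _).trans_le (e.symm j).1.2,
    biproduct.desc fun j => principalProj.lift N (b _ (e.symm j).2), fun E => ?_⟩
  rw [← LinearMap.range_eq_top, range_biproduct_desc_lift_app,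
    e.symm.surjective.iUnion_comp fun p => Set.range fun ψ : E ⟶ FSObj.fin p.1 =>
      N.map ψ.op (b p.1 p.2),
    eq_top_iff, ← hgen E, Submodule.span_le]
  rintro - ⟨F, φ, y, hF, rfl⟩
  obtain ⟨c, ⟨i⟩⟩ := F.exists_iso_fin hF
  refine Submodule.span_mono ?_ (map_op_mem_span_of_iso i (b c).span_eq φ y)
  rintro - ⟨-, ⟨ψ, rfl⟩, -, ⟨r, rfl⟩, rfl⟩
  exact Set.mem_iUnion.2 ⟨⟨c, r⟩, ψ, rfl⟩

end

theorem stmt_4_general (N : FSObjᵒᵖ ⥤ ModuleCat ℚ) (m : ℕ) :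
    (∃ (k : ℕ) (F : Fin k → FSObj),
      (∀ j, Fintype.card (F j).carrier ≤ m) ∧
      ∃ η : (⨁ fun j => principalProj (F j)) ⟶ N,
        ∀ E : FSObj, Function.Surjective (η.app (op E))) ↔
    (∀ E : FSObj, FiniteDimensional ℚ (N.obj (op E)) ∧
      Submodule.span ℚ
        {x : N.obj (op E) | ∃ (F : FSObj) (φ : E ⟶ F) (y : N.obj (op F)),
          Fintype.card F.carrier ≤ m ∧ x = N.map φ.op y} = ⊤) := by
  constructor
  · rintro ⟨k, F, hF, η, hη⟩ E
    obtain ⟨hfin, hgen⟩ := finiteDimensional_and_generatedInDegreesLE hF η hη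
    exact ⟨hfin E, hgen E⟩
  · intro h
    exact exists_surjective_biproduct_of_generatedInDegreesLE (fun E => (h E).1) fun E => (h E).2

/-- an `FSᵒᵖ`-module `N` is a pointwise-surjective quotient of a finite
direct sum of principal projectives `P_{F_j}` with `|F_j| ≤ m` if and only if each
`N(E)` is finite-dimensional and spanned by the images of the pullbacks `N(φ)` along
surjections `φ : E → F` with `|F| ≤ m`. -/
theorem stmt_4 (N : FSObjᵒᵖ ⥤ ModuleCat ℚ) (m : ℕ) (hm : 1 ≤ m) :
    (∃ (k : ℕ) (F : Fin k → FSObj),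
      (∀ j, Fintype.card (F j).carrier ≤ m) ∧
      ∃ η : (⨁ fun j => principalProj (F j)) ⟶ N,
        ∀ E : FSObj, Function.Surjective (η.app (op E))) ↔
    (∀ E : FSObj, FiniteDimensional ℚ (N.obj (op E)) ∧
      Submodule.span ℚ
        {x : N.obj (op E) | ∃ (F : FSObj) (φ : E ⟶ F) (y : N.obj (op F)),
          Fintype.card F.carrier ≤ m ∧ x = N.map φ.op y} = ⊤) :=
  stmt_4_general N m
end

section
/- Fix a finite set S ⊆ ℝ. Define an FS^op-module N over ℚ as follows: for a nonempty finite type E, N(E) is the free ℚ-vector space with basis the set {v : E → S | v is not identically zero}, and for a surjection φ : E → F, the pullback N(φ) : N(F) → N(E) sends the basis element w to the basis element w ∘ φ (which is not identically zero since φ is surjective). Then N is finitely generated in degrees ≤ |S|: each N(E) is finite-dimensional, and N(E) is spanned by the union, over surjections φ : E → F with |F| ≤ |S|, of the images of the maps N(φ). -/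
open CategoryTheory Opposite

/-- The type of functions `E → S` that are not identically zero
(for `S` a finite set of reals). -/
def NzFun (S : Finset ℝ) (E : FSObj) : Type :=
  {v : E.carrier → S // ∃ e, (v e : ℝ) ≠ 0}

/-- Pullback of a not-identically-zero function along a surjection is
not identically zero. -/
def NzFun.pullback (S : Finset ℝ) {E F : FSObj} (φ : E ⟶ F) (w : NzFun S F) :
    NzFun S E :=
  ⟨w.1 ∘ φ.1, by
    obtain ⟨f, hf⟩ := w.2
    obtain ⟨e, he⟩ := φ.2 f
    exact ⟨e, by simp only [Function.comp_apply, he]; exact hf⟩⟩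

/-- The `FSᵒᵖ`-module sending a nonempty finite type `E` to the free `ℚ`-vector
space on the set of not-identically-zero functions `v : E → S`, with pullback along
a surjection `φ : E → F` sending a basis element `w` to `w ∘ φ`. -/
noncomputable def resMod (S : Finset ℝ) : FSObjᵒᵖ ⥤ ModuleCat ℚ where
  obj E := ModuleCat.of ℚ (NzFun S (unop E) →₀ ℚ)
  map {E E'} φ := ModuleCat.ofHom (Finsupp.lmapDomain ℚ ℚ (NzFun.pullback S φ.unop))
  map_id E := by
    show ModuleCat.ofHom (Finsupp.lmapDomain ℚ ℚ (NzFun.pullback S (𝟙 E : E ⟶ E).unop)) = _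
    have h : NzFun.pullback S (𝟙 E : E ⟶ E).unop = id := by
      funext w; exact Subtype.ext rfl
    rw [h, Finsupp.lmapDomain_id]; rfl
  map_comp {E E' E''} φ φ' := by
    show ModuleCat.ofHom (Finsupp.lmapDomain ℚ ℚ (NzFun.pullback S (φ ≫ φ').unop)) = _
    have h : NzFun.pullback S (φ ≫ φ').unop =
        NzFun.pullback S φ'.unop ∘ NzFun.pullback S φ.unop := by
      funext w; exact Subtype.ext rfl
    rw [h, Finsupp.lmapDomain_comp]; rfl

/-! A nonzero `v : E → S` factors as the surjection `E ↠ range v` followed by the inclusion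
`range v ↪ S`, which is again nonzero; so the basis vector `v` of `N(E)` is the pullback of a
basis vector of `N(range v)`, and `|range v| ≤ |S|`. -/

namespace FSObj

noncomputable def range {α : Type} {E : FSObj} (f : E.carrier → α) : FSObj :=
  @FSObj.mk (Set.range f) (Fintype.ofFinite _) inferInstance

def rangeFactorization {α : Type} {E : FSObj} (f : E.carrier → α) : E ⟶ range f :=
  ⟨Set.rangeFactorization f, Set.rangeFactorization_surjective⟩

theorem card_range_le {α : Type} [Fintype α] {E : FSObj} (f : E.carrier → α) :
    Fintype.card (range f).carrier ≤ Fintype.card α :=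
  Fintype.card_le_of_injective _ Subtype.val_injective

end FSObj

namespace NzFun

variable {S : Finset ℝ} {E : FSObj}

instance finite : Finite (NzFun S E) :=
  Subtype.finite

def rangeInclusion (v : NzFun S E) : NzFun S (FSObj.range v.1) :=
  ⟨Subtype.val, by
    obtain ⟨e, he⟩ := v.2
    exact ⟨⟨v.1 e, e, rfl⟩, he⟩⟩

theorem pullback_rangeFactorization_rangeInclusion (v : NzFun S E) :
    pullback S (FSObj.rangeFactorization v.1) v.rangeInclusion = v :=
  rfl

end NzFun

theorem resMod_map_single (S : Finset ℝ) {E F : FSObj} (φ : E ⟶ F) (w : NzFun S F) (c : ℚ) :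
    (resMod S).map φ.op (Finsupp.single w c) = Finsupp.single (NzFun.pullback S φ w) c :=
  Finsupp.mapDomain_single

theorem resMod_single_mem_span (S : Finset ℝ) {E : FSObj} (v : NzFun S E) :
    Finsupp.single v 1 ∈ Submodule.span ℚ
      {x : (resMod S).obj (op E) | ∃ (F : FSObj) (φ : E ⟶ F) (y : (resMod S).obj (op F)),
        Fintype.card F.carrier ≤ S.card ∧ x = (resMod S).map φ.op y} := by
  refine Submodule.subset_span ⟨FSObj.range v.1, FSObj.rangeFactorization v.1,
    Finsupp.single v.rangeInclusion 1, ?_, ?_⟩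
  · simpa using FSObj.card_range_le v.1
  · rw [resMod_map_single, NzFun.pullback_rangeFactorization_rangeInclusion]

/-- the module `N` with `N(E)` free on the nonzero elements of `S^E`
is finitely generated in degrees `≤ |S|`. -/
theorem stmt_8 (S : Finset ℝ) :
    (∀ E : FSObj, FiniteDimensional ℚ ((resMod S).obj (op E))) ∧
      GeneratedInDegreesLE (resMod S) S.card := by
  refine ⟨fun E => inferInstanceAs (Module.Finite ℚ (NzFun S E →₀ ℚ)), fun E => ?_⟩
  refine top_unique ((Finsupp.basisSingleOne (R := ℚ) (ι := NzFun S E)).span_eq.ge.trans ?_)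
  refine Submodule.span_le.2 ?_
  rintro _ ⟨v, rfl⟩
  rw [Finsupp.coe_basisSingleOne]
  exact resMod_single_mem_span S v
end

section
/- Let R be a commutative ring, let q ∈ R, and let i ≥ 0. Then in the formal power series ring R[[t]] the following identity holds: (Σ_{n=0}^{∞} e_i(1, q, q², …, q^{n−1}) tⁿ) · ∏_{j=0}^{i} (1 − q^j t) = q^{i(i−1)/2} t^i, where e_i(1, q, …, q^{n−1}) denotes the i-th elementary symmetric polynomial evaluated at the n values q⁰, q¹, …, q^{n−1} (interpreted as 0 when n < i, and as 1 when i = 0). Equivalently, Σ_{n≥0} e_i(1, q, …, q^{n−1}) tⁿ = q^{i(i−1)/2} t^i / ∏_{j=0}^{i} (1 − q^j t), so this generating function is rational with (simple) poles exactly at t = q^{−j} for j = 0, 1, …, i when q is an appropriate nonzero scalar. -/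
/-!
Since `{1, q, …, qⁿ} = {1} + q • {1, …, qⁿ⁻¹}`, the values `eᵢ(1, q, …, qⁿ⁻¹)` satisfy
`e_{i+1}(1, …, qⁿ) = q^{i+1} e_{i+1}(1, …, qⁿ⁻¹) + qⁱ eᵢ(1, …, qⁿ⁻¹)`, i.e. multiplying
the `(i+1)`-st generating function by `1 - q^{i+1} t` gives `qⁱ t` times the `i`-th one.
Induction on `i`, starting from `(∑ tⁿ) (1 - t) = 1`, gives the identity with exponent
`0 + 1 + ⋯ + (i-1) = i.choose 2`.
-/

open PowerSeries

namespace Multiset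

variable {R : Type*} [CommSemiring R]

theorem esymm_zero_right (s : Multiset R) : s.esymm 0 = 1 := by
  simp [esymm, powersetCard_zero_left]

theorem esymm_zero_left_succ (k : ℕ) : (0 : Multiset R).esymm (k + 1) = 0 := by
  simp [esymm, powersetCard_zero_right]

theorem esymm_cons_succ (a : R) (s : Multiset R) (k : ℕ) :
    (a ::ₘ s).esymm (k + 1) = s.esymm (k + 1) + a * s.esymm k := by
  simp [esymm, powersetCard_cons, map_map, sum_map_mul_left]

theorem esymm_map_mul_left (a : R) (s : Multiset R) (k : ℕ) :
    (s.map (a * ·)).esymm k = a ^ k * s.esymm k :=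
  (pow_smul_esymm a k s).symm

theorem map_pow_range_succ (q : R) (n : ℕ) :
    (range (n + 1)).map (q ^ ·) = 1 ::ₘ ((range n).map (q ^ ·)).map (q * ·) := by
  simp [range, List.range_succ_eq_map, Function.comp_def, pow_succ']

theorem esymm_map_pow_range_succ_succ (q : R) (n k : ℕ) :
    ((range (n + 1)).map (q ^ ·)).esymm (k + 1) =
      q ^ (k + 1) * ((range n).map (q ^ ·)).esymm (k + 1) +
        q ^ k * ((range n).map (q ^ ·)).esymm k := by
  rw [map_pow_range_succ, esymm_cons_succ, esymm_map_mul_left, esymm_map_mul_left, one_mul]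

end Multiset

section GeneratingFunction

variable {R : Type*}

def esymmGeomGenFun [CommSemiring R] (q : R) (i : ℕ) : R⟦X⟧ :=
  mk fun n => ((Multiset.range n).map (q ^ ·)).esymm i

theorem esymmGeomGenFun_zero [CommSemiring R] (q : R) : esymmGeomGenFun q 0 = mk 1 := by
  ext n
  simp [esymmGeomGenFun, Multiset.esymm_zero_right]

variable [CommRing R]

theorem esymmGeomGenFun_succ_mul (q : R) (i : ℕ) :
    esymmGeomGenFun q (i + 1) * (1 - C (q ^ (i + 1)) * X) =
      C (q ^ i) * X * esymmGeomGenFun q i := by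
  ext n
  cases n with
  | zero => simp [esymmGeomGenFun, Multiset.esymm_zero_left_succ]
  | succ n =>
    rw [mul_one_sub, mul_left_comm, mul_assoc (C (q ^ i)) X, mul_comm X]
    simp only [esymmGeomGenFun, map_sub, coeff_succ_mul_X, coeff_mk, coeff_C_mul,
      Multiset.esymm_map_pow_range_succ_succ]
    ring

theorem esymmGeomGenFun_mul_prod (q : R) (i : ℕ) :
    esymmGeomGenFun q i * ∏ j ∈ Finset.range (i + 1), (1 - C (q ^ j) * X) =
      C (q ^ i.choose 2) * X ^ i := by
  induction i with
  | zero => simp [esymmGeomGenFun_zero, mk_one_mul_one_sub_eq_one]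
  | succ i ih =>
    calc esymmGeomGenFun q (i + 1) * ∏ j ∈ Finset.range (i + 2), (1 - C (q ^ j) * X)
        = esymmGeomGenFun q (i + 1) * (1 - C (q ^ (i + 1)) * X) *
            ∏ j ∈ Finset.range (i + 1), (1 - C (q ^ j) * X) := by
          rw [Finset.prod_range_succ, mul_comm _ (1 - _), mul_assoc]
      _ = C (q ^ i) * X * (C (q ^ i.choose 2) * X ^ i) := by
          rw [esymmGeomGenFun_succ_mul, mul_assoc, ih]
      _ = C (q ^ (i + 1).choose 2) * X ^ (i + 1) := by
          rw [Nat.choose_succ_succ', Nat.choose_one_right, pow_add, map_mul]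
          ring

end GeneratingFunction

/-- the generating function of `e_i(1, q, …, q^{n-1})` satisfies
`(∑ₙ e_i(1,…,q^{n-1}) tⁿ) · ∏_{j=0}^{i} (1 − qʲ t) = q^{i(i−1)/2} tⁱ` in `R⟦t⟧`. -/
theorem stmt_10 (R : Type) [CommRing R] (q : R) (i : ℕ) :
    (PowerSeries.mk fun n => ((Multiset.range n).map (fun j => q ^ j)).esymm i) *
      ∏ j ∈ Finset.range (i + 1), (1 - PowerSeries.C (q ^ j) * PowerSeries.X) =
    PowerSeries.C (q ^ (i * (i - 1) / 2)) * PowerSeries.X ^ i := by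
  rw [← Nat.choose_two_right]
  exact esymmGeomGenFun_mul_prod q i
end
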